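/- The range of the truncated Hilbert transform with overlap H_T : L²(a₂,a₄) → L²(a₁,a₃) is a proper subset of L²(a₁,a₃). -/

import Mathlib

/-! Take `g = 𝟙_[a₂, a₃]`. If `H_T f = g` a.e., then on `(a₁, a₂)`, which lies to the left of the
support of `f`, the principal value is an honest integral, so the Cauchy integral
`x ↦ ∫ f(y) / (y - x) dy` vanishes there. Differentiating under the integral sign, all the moments
`∫ f(y) / (y - x₀)^(n+1) dy` vanish at a point `x₀ < a₂`: `f(y) / (y - x₀)` integrates to zero
against every polynomial in `(y - x₀)⁻¹`. Since `y ↦ (y - x₀)⁻¹` is injective on `[a₂, a₄]`,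
these polynomials are uniformly dense in `C([a₂, a₄])` by Stone–Weierstrass, so `f = 0` a.e.
and `H_T f = 0 ≠ g`. -/

open MeasureTheory Filter Set

/-- The Hilbert transform `(Hf)(x) = (1/π) p.v. ∫ f(y)/(y-x) dy`, defined as a
principal value: the limit as `ε → 0⁺` of the truncated integrals. -/
noncomputable def pvHilbert (f : ℝ → ℝ) (x : ℝ) : ℝ :=
  limUnder (nhdsWithin (0 : ℝ) (Ioi 0))
    (fun ε => (1 / Real.pi) * ∫ y in {y : ℝ | ε ≤ |y - x|}, f y / (y - x))

/-- The truncated Hilbert transform with overlap `H_T = P_{[a₁,a₃]} H P_{[a₂,a₄]}`. -/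
noncomputable def truncHT (a₁ a₂ a₃ a₄ : ℝ) (f : ℝ → ℝ) : ℝ → ℝ :=
  (Icc a₁ a₃).indicator (pvHilbert ((Icc a₂ a₄).indicator f))

open Polynomial Topology

theorem exists_polynomial_comp_near {K : Set ℝ} (hK : IsCompact K) {φ G : ℝ → ℝ}
    (hφ : ContinuousOn φ K) (hφK : InjOn φ K) (hG : ContinuousOn G K) {ε : ℝ} (hε : 0 < ε) :
    ∃ p : ℝ[X], ∀ y ∈ K, |p.eval (φ y) - G y| < ε := by
  have : CompactSpace K := isCompact_iff_compactSpace.mp hK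
  let φK : C(K, ℝ) := ⟨K.domRestrict φ, hφ.domRestrict⟩
  have hsep : (Algebra.adjoin ℝ {φK}).SeparatesPoints := fun x y hxy =>
    ⟨φK, ⟨φK, Algebra.self_mem_adjoin_singleton ℝ φK, rfl⟩,
      hφK.ne x.2 y.2 (Subtype.coe_ne_coe.mpr hxy)⟩
  obtain ⟨⟨g, hg⟩, hgG⟩ := ContinuousMap.exists_mem_subalgebra_near_continuous_of_separatesPoints
    _ hsep (K.domRestrict G) hG.domRestrict ε hε
  rw [Algebra.adjoin_singleton_eq_range_aeval] at hg
  obtain ⟨p, rfl⟩ := hg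
  exact ⟨p, fun y hy => by simpa [aeval_continuousMap_apply, φK] using hgG ⟨y, hy⟩⟩

theorem integral_mul_eq_zero_of_forall_near {α : Type*} [MeasurableSpace α] {μ : Measure α}
    {K : Set α} {ψ G : α → ℝ} (hψ : Integrable ψ μ) (hψK : Function.support ψ ⊆ K)
    (hGψ : Integrable (fun y => G y * ψ y) μ)
    (happrox : ∀ ε > 0, ∃ h : α → ℝ, Integrable (fun y => h y * ψ y) μ ∧
      ∫ y, h y * ψ y ∂μ = 0 ∧ ∀ y ∈ K, |h y - G y| ≤ ε) :
    ∫ y, G y * ψ y ∂μ = 0 := by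
  have hbound : ∀ ε > 0, |∫ y, G y * ψ y ∂μ| ≤ ε * ∫ y, |ψ y| ∂μ := by
    intro ε hε
    obtain ⟨h, hhψ, hh0, hhG⟩ := happrox ε hε
    have hdiff : ∀ y, ‖(h y - G y) * ψ y‖ ≤ ε * |ψ y| := by
      intro y
      by_cases hy : y ∈ K
      · rw [norm_mul, Real.norm_eq_abs]
        exact mul_le_mul_of_nonneg_right (hhG y hy) (abs_nonneg _)
      · simp [Function.notMem_support.mp (mt (@hψK y) hy)]
    calc |∫ y, G y * ψ y ∂μ| = ‖∫ y, (h y - G y) * ψ y ∂μ‖ := by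
          simp_rw [sub_mul]
          rw [integral_sub hhψ hGψ, hh0, zero_sub, norm_neg, Real.norm_eq_abs]
      _ ≤ ∫ y, ε * |ψ y| ∂μ := norm_integral_le_of_norm_le (hψ.abs.const_mul ε) (ae_of_all _ hdiff)
      _ = ε * ∫ y, |ψ y| ∂μ := integral_const_mul _ _
  have hlim : Tendsto (fun ε => ε * ∫ y, |ψ y| ∂μ) (𝓝[>] 0) (𝓝 (0 * ∫ y, |ψ y| ∂μ)) :=
    (tendsto_id.mul_const _).mono_left nhdsWithin_le_nhds
  rw [zero_mul] at hlim
  exact abs_nonpos_iff.mp <| ge_of_tendsto hlim <|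
    eventually_nhdsWithin_of_forall fun ε hε => hbound ε hε

section CauchyIntegral

variable {f : ℝ → ℝ} {a b x : ℝ}

theorem abs_div_sub_pow_le (hfa : Function.support f ⊆ Ici a) {δ : ℝ} (hδ : 0 < δ)
    (hx : x + δ ≤ a) (m : ℕ) (y : ℝ) : |f y / (y - x) ^ m| ≤ |f y| / δ ^ m := by
  by_cases hy : f y = 0
  · simp [hy]
  have hδy : δ ≤ y - x := by linarith [show a ≤ y from hfa hy]
  rw [abs_div, abs_of_pos (pow_pos (hδ.trans_le hδy) m)]
  exact div_le_div_of_nonneg_left (abs_nonneg _) (pow_pos hδ m) (pow_le_pow_left₀ hδ.le hδy m)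

theorem aestronglyMeasurable_div_sub_pow (hf : Integrable f) (x : ℝ) (m : ℕ) :
    AEStronglyMeasurable (fun y => f y / (y - x) ^ m) :=
  (hf.aemeasurable.div ((measurable_id.sub_const x).pow_const m).aemeasurable).aestronglyMeasurable

theorem integrable_div_sub_pow (hf : Integrable f) (hfa : Function.support f ⊆ Ici a)
    (hx : x < a) (m : ℕ) : Integrable (fun y => f y / (y - x) ^ m) :=
  (hf.norm.div_const _).mono' (aestronglyMeasurable_div_sub_pow hf x m) <|
    ae_of_all _ (abs_div_sub_pow_le hfa (sub_pos.mpr hx) (by linarith) m)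

theorem hasDerivAt_div_sub_pow (c y t : ℝ) (hyt : y ≠ t) (n : ℕ) :
    HasDerivAt (fun t => c / (y - t) ^ (n + 1)) ((n + 1) * (c / (y - t) ^ (n + 2))) t := by
  have hne : (y - t) ^ (n + 1) ≠ 0 := pow_ne_zero _ (sub_ne_zero.mpr hyt)
  have h := ((((hasDerivAt_id t).const_sub y).fun_pow (n + 1)).fun_inv hne).const_mul c
  simp only [id, ← div_eq_mul_inv, Nat.add_sub_cancel] at h
  refine h.congr_deriv ?_
  field_simp
  push_cast
  ring

theorem hasDerivAt_integral_div_sub_pow (hf : Integrable f) (hfa : Function.support f ⊆ Ici a)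
    (hx : x < a) (n : ℕ) :
    HasDerivAt (fun t => ∫ y, f y / (y - t) ^ (n + 1))
      ((n + 1) * ∫ y, f y / (y - x) ^ (n + 2)) x := by
  obtain ⟨δ, hδ, hδa⟩ : ∃ δ, 0 < δ ∧ x + 2 * δ = a := ⟨(a - x) / 2, by linarith, by ring⟩
  have hball : ∀ t ∈ Metric.ball x δ, t + δ ≤ a := fun t ht => by
    linarith [(abs_lt.mp (Real.dist_eq t x ▸ Metric.mem_ball.mp ht)).2]
  have key := hasDerivAt_integral_of_dominated_loc_of_deriv_le
    (F := fun t y => f y / (y - t) ^ (n + 1))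
    (F' := fun t y => (n + 1) * (f y / (y - t) ^ (n + 2)))
    (bound := fun y => (n + 1) * (|f y| / δ ^ (n + 2)))
    (Metric.ball_mem_nhds x hδ)
    (Eventually.of_forall fun t => aestronglyMeasurable_div_sub_pow hf t (n + 1))
    (integrable_div_sub_pow hf hfa hx (n + 1))
    ((aestronglyMeasurable_div_sub_pow hf x (n + 2)).const_mul _)
    (ae_of_all _ fun y t ht => by
      rw [Real.norm_eq_abs, abs_mul, abs_of_pos (by positivity)]
      exact mul_le_mul_of_nonneg_left (abs_div_sub_pow_le hfa hδ (hball t ht) _ y) (by positivity))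
    ((hf.norm.div_const _).const_mul _)
    (ae_of_all _ fun y t ht => by
      by_cases hy : f y = 0
      · simpa [hy] using hasDerivAt_const t (0 : ℝ)
      · exact hasDerivAt_div_sub_pow _ _ _ (by linarith [hball t ht, show a ≤ y from hfa hy]) n)
  simpa only [integral_const_mul] using key.2

theorem integral_div_sub_pow_eq_zero_of_eqOn (hf : Integrable f)
    (hfa : Function.support f ⊆ Ici a) {U : Set ℝ} (hU : IsOpen U) (hUa : U ⊆ Iio a)
    (h0 : EqOn (fun x => ∫ y, f y / (y - x)) 0 U) (n : ℕ) :
    EqOn (fun x => ∫ y, f y / (y - x) ^ (n + 1)) 0 U := by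
  induction n with
  | zero => simpa using h0
  | succ n ih =>
    intro x hx
    have hderiv := hasDerivAt_integral_div_sub_pow hf hfa (hUa hx) n
    have hderiv0 : HasDerivAt (fun t => ∫ y, f y / (y - t) ^ (n + 1)) 0 x :=
      (hasDerivAt_const x 0).congr_of_eventuallyEq (eventually_of_mem (hU.mem_nhds hx) ih)
    exact (mul_eq_zero.mp (hderiv.unique hderiv0)).resolve_left (by positivity)

theorem integrable_and_integral_eval_inv_sub_mul_eq_zero (hf : Integrable f)
    (hfa : Function.support f ⊆ Ici a) (hx : x < a)
    (hmom : ∀ n : ℕ, ∫ y, f y / (y - x) ^ (n + 1) = 0) (p : ℝ[X]) :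
    Integrable (fun y => p.eval (y - x)⁻¹ * (f y / (y - x))) ∧
      ∫ y, p.eval (y - x)⁻¹ * (f y / (y - x)) = 0 := by
  induction p using Polynomial.induction_on' with
  | add p q hp hq =>
    simp only [eval_add, add_mul]
    exact ⟨hp.1.add hq.1, by rw [integral_add hp.1 hq.1, hp.2, hq.2, add_zero]⟩
  | monomial n c =>
    have hmonomial : ∀ y, (monomial n c).eval (y - x)⁻¹ * (f y / (y - x)) =
        c * (f y / (y - x) ^ (n + 1)) := fun y => by
      simp only [eval_monomial, div_eq_mul_inv, pow_succ, mul_inv, inv_pow]; ring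
    simp only [hmonomial]
    exact ⟨(integrable_div_sub_pow hf hfa hx _).const_mul c,
      by rw [integral_const_mul, hmom, mul_zero]⟩

theorem ae_eq_zero_of_integral_div_sub_pow_eq_zero (hf : Integrable f)
    (hfab : Function.support f ⊆ Icc a b) (hx : x < a)
    (hmom : ∀ n : ℕ, ∫ y, f y / (y - x) ^ (n + 1) = 0) : f =ᵐ[volume] 0 := by
  have hfa : Function.support f ⊆ Ici a := hfab.trans Icc_subset_Ici_self
  have hψ : Integrable (fun y => f y / (y - x)) := by
    simpa using integrable_div_sub_pow hf hfa hx 1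
  have hψab : Function.support (fun y => f y / (y - x)) ⊆ Icc a b :=
    (Function.support_div _ _).trans_subset (inter_subset_left.trans hfab)
  have hψ0 : ∀ᵐ y, f y / (y - x) = 0 := by
    refine ae_eq_zero_of_integral_contDiff_smul_eq_zero hψ.locallyIntegrable fun G hG hGc => ?_
    obtain ⟨C, hC⟩ := hG.continuous.bounded_above_of_compact_support hGc
    simp only [smul_eq_mul]
    refine integral_mul_eq_zero_of_forall_near hψ hψab
      (hψ.bdd_mul hG.continuous.aestronglyMeasurable (ae_of_all _ hC)) fun ε hε => ?_
    have hinv : ContinuousOn (fun y => (y - x)⁻¹) (Icc a b) :=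
      (continuousOn_id.sub continuousOn_const).inv₀ fun y hy =>
        sub_ne_zero.mpr (hx.trans_le hy.1).ne'
    have hinj : InjOn (fun y => (y - x)⁻¹) (Icc a b) := fun y _ z _ hyz => by
      simpa using inv_injective hyz
    obtain ⟨p, hp⟩ := exists_polynomial_comp_near isCompact_Icc hinv hinj
      hG.continuous.continuousOn hε
    obtain ⟨hpψ, hpψ0⟩ := integrable_and_integral_eval_inv_sub_mul_eq_zero hf hfa hx hmom p
    exact ⟨fun y => p.eval (y - x)⁻¹, hpψ, hpψ0, fun y hy => (hp y hy).le⟩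
  filter_upwards [hψ0] with y hy
  rcases div_eq_zero_iff.mp hy with hfy | hyx
  · exact hfy
  · exact Function.notMem_support.mp fun hy => by linarith [mem_Ici.mp (hfa hy), sub_eq_zero.mp hyx]

end CauchyIntegral

theorem pvHilbert_eq_integral_of_lt {f : ℝ → ℝ} {a x : ℝ} (hfa : Function.support f ⊆ Ici a)
    (hx : x < a) : pvHilbert f x = 1 / Real.pi * ∫ y, f y / (y - x) := by
  refine Tendsto.limUnder_eq (tendsto_const_nhds.congr' ?_)
  filter_upwards [Ioo_mem_nhdsGT (sub_pos.mpr hx)] with ε hε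
  rw [setIntegral_eq_integral_of_forall_compl_eq_zero fun y hy => ?_]
  have hya : y < a := by
    linarith [(abs_lt.mp (not_le.mp (show ¬ε ≤ |y - x| from hy))).2, hε.2]
  rw [Function.notMem_support.mp fun h => not_le.mpr hya (hfa h), zero_div]

theorem pvHilbert_eq_zero_of_ae_eq_zero {f : ℝ → ℝ} (hf : f =ᵐ[volume] 0) : pvHilbert f = 0 := by
  funext x
  have hzero : ∀ ε : ℝ, ∫ y in {y : ℝ | ε ≤ |y - x|}, f y / (y - x) = 0 := fun ε =>
    integral_eq_zero_of_ae <| by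
      filter_upwards [ae_restrict_of_ae hf] with y hy
      simp [hy]
  simp only [pvHilbert, hzero, mul_zero, Pi.zero_apply]
  exact tendsto_const_nhds.limUnder_eq

theorem ae_eq_zero_of_pvHilbert_ae_eq_zero_on {f : ℝ → ℝ} {a a' b : ℝ} (hf : Integrable f)
    (hfab : Function.support f ⊆ Icc a b) (ha' : a' < a)
    (h : pvHilbert f =ᵐ[volume.restrict (Ioo a' a)] 0) : f =ᵐ[volume] 0 := by
  have hfa : Function.support f ⊆ Ici a := hfab.trans Icc_subset_Ici_self
  have hcauchy : EqOn (fun x => ∫ y, f y / (y - x)) 0 (Ioo a' a) := by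
    refine Measure.eqOn_Ioo_of_ae_eq volume ?_ (fun x hx => ?_) continuousOn_const
    · filter_upwards [h, ae_restrict_mem measurableSet_Ioo] with x hx hxI
      rw [pvHilbert_eq_integral_of_lt hfa hxI.2] at hx
      simpa [Real.pi_ne_zero] using hx
    · simpa using (hasDerivAt_integral_div_sub_pow hf hfa hx.2 0).continuousAt.continuousWithinAt
  exact ae_eq_zero_of_integral_div_sub_pow_eq_zero hf hfab (x := (a' + a) / 2) (by linarith)
    fun n => integral_div_sub_pow_eq_zero_of_eqOn hf hfa isOpen_Ioo (fun _ hx => hx.2) hcauchy n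
      ⟨by linarith, by linarith⟩

theorem truncHT_range_proper_general (a₁ a₂ a₃ a₄ : ℝ)
    (h12 : a₁ < a₂) (h23 : a₂ < a₃) :
    ∃ g : ℝ → ℝ, MemLp g 2 (volume : Measure ℝ) ∧ Function.support g ⊆ Icc a₁ a₃ ∧
      ∀ f : ℝ → ℝ, MemLp f 2 (volume : Measure ℝ) → Function.support f ⊆ Icc a₂ a₄ →
        ¬ (truncHT a₁ a₂ a₃ a₄ f =ᵐ[volume] g) := by
  refine ⟨(Icc a₂ a₃).indicator 1, memLp_indicator_const 2 measurableSet_Icc 1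
      (Or.inr measure_Icc_lt_top.ne), ?_, fun f hf hfsupp hHT => ?_⟩
  · exact support_indicator_subset.trans (Icc_subset_Icc h12.le le_rfl)
  have hfint : Integrable f := memLp_one_iff_integrable.mp <|
    hf.mono_exponent_of_measure_support_ne_top (fun y hy => Function.notMem_support.mp
      (mt (@hfsupp y) hy)) measure_Icc_lt_top.ne (by norm_num)
  have hind : (Icc a₂ a₄).indicator f = f := indicator_eq_self.mpr hfsupp
  have hpv : pvHilbert f =ᵐ[volume.restrict (Ioo a₁ a₂)] 0 := by
    filter_upwards [ae_restrict_of_ae hHT, ae_restrict_mem measurableSet_Ioo] with x hx hxI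
    have hx₁₃ : x ∈ Icc a₁ a₃ := ⟨hxI.1.le, by linarith [hxI.2]⟩
    have hx₂₃ : x ∉ Icc a₂ a₃ := fun h => not_le.mpr hxI.2 h.1
    simpa [truncHT, hind, hx₁₃, hx₂₃] using hx
  have hf0 := ae_eq_zero_of_pvHilbert_ae_eq_zero_on hfint hfsupp h12 hpv
  have hg0 : (Icc a₂ a₃).indicator (1 : ℝ → ℝ) =ᵐ[volume] 0 := by
    refine hHT.symm.trans (Eventually.of_forall fun x => ?_)
    simp [truncHT, hind, pvHilbert_eq_zero_of_ae_eq_zero hf0]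
  rw [indicator_ae_eq_zero, Function.support_one, inter_univ, Real.volume_Icc,
    ENNReal.ofReal_eq_zero] at hg0
  linarith

/-- The range of the truncated Hilbert transform with overlap
`H_T : L²(a₂,a₄) → L²(a₁,a₃)` is a proper subset of `L²(a₁,a₃)`: there is a
`g ∈ L²(a₁,a₃)` which is not (a.e. on `(a₁,a₃)`) of the form `H_T f` for any
`f ∈ L²(a₂,a₄)`. -/
theorem truncHT_range_proper (a₁ a₂ a₃ a₄ : ℝ)
    (h12 : a₁ < a₂) (h23 : a₂ < a₃) (h34 : a₃ < a₄) :
    ∃ g : ℝ → ℝ, MemLp g 2 (volume : Measure ℝ) ∧ Function.support g ⊆ Icc a₁ a₃ ∧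
      ∀ f : ℝ → ℝ, MemLp f 2 (volume : Measure ℝ) → Function.support f ⊆ Icc a₂ a₄ →
        ¬ (truncHT a₁ a₂ a₃ a₄ f =ᵐ[volume] g) :=
  truncHT_range_proper_general a₁ a₂ a₃ a₄ h12 h23
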